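/- arXiv:math/0501206 — 5 statements merged into one kernel-verified Lean document; each statement's English description precedes it below -/
import Mathlib

section
/- Let n be a positive integer and let α, γ be complex numbers. Define the binary operation A ∘ B = α(AB − BA) + γ((tr B)·A − (tr A)·B) on n×n complex matrices. Then for all n×n complex matrices A, B, C, D one has ((A∘B)∘C)∘D + ((C∘B)∘D)∘A + ((C∘D)∘A)∘B + ((A∘D)∘B)∘C + ((C∘A)∘B)∘D + ((D∘C)∘B)∘A + ((A∘C)∘D)∘B + ((B∘A)∘D)∘C + ((B∘C)∘A)∘D + ((B∘D)∘C)∘A + ((D∘A)∘C)∘B + ((D∘B)∘A)∘C = 0. -/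
/-!
Only two features of the matrix commutator and the trace matter: `⁅·,·⁆` is a Lie bracket and
`t = tr` is a linear form killing brackets. Then `t (x ∘ y) = 0`, so on products
`p ∘ z = α ⁅p, z⁆ + γ t(z) p`, and the Jacobiator of `∘` collapses: its `α²`-part is the Jacobi
identity of `⁅·,·⁆`, its `γ²`-part cancels, leaving `αγ (t x ⁅z, y⁆ + t y ⁅x, z⁆ + t z ⁅y, x⁆)`.
Grouped by their last factor, the twelve terms are the four Jacobiators of three of `A, B, C, D`
multiplied by the fourth; there the `α`-part vanishes by four more Jacobi identities and the
`γ`-part by antisymmetry of the bracket.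
-/

open Matrix

noncomputable def circ {n : ℕ} (α γ : ℂ) (A B : Matrix (Fin n) (Fin n) ℂ) :
    Matrix (Fin n) (Fin n) ℂ :=
  α • (A * B - B * A) + γ • (B.trace • A - A.trace • B)

lemma lie_lie_add_lie_lie_add_lie_lie {L : Type*} [LieRing L] (x y z : L) :
    ⁅⁅x, y⁆, z⁆ + ⁅⁅y, z⁆, x⁆ + ⁅⁅z, x⁆, y⁆ = 0 := by
  rw [← lie_skew ⁅x, y⁆ z, ← lie_skew ⁅y, z⁆ x, ← lie_skew ⁅z, x⁆ y]
  linear_combination (norm := abel) -lie_jacobi x y z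

section DeformedBracket

variable {R L : Type*} [CommRing R] [LieRing L] [LieAlgebra R L]

def deformedBracket (t : L →ₗ[R] R) (α γ : R) (x y : L) : L :=
  α • ⁅x, y⁆ + γ • (t y • x - t x • y)

def deformedJacobiator (t : L →ₗ[R] R) (α γ : R) (x y z : L) : L :=
  deformedBracket t α γ (deformedBracket t α γ x y) z +
    deformedBracket t α γ (deformedBracket t α γ y z) x +
    deformedBracket t α γ (deformedBracket t α γ z x) y

variable {t : L →ₗ[R] R} (α γ : R)

lemma add_deformedBracket (x y z : L) :
    deformedBracket t α γ (x + y) z = deformedBracket t α γ x z + deformedBracket t α γ y z := by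
  simp only [deformedBracket, add_lie, map_add, smul_add, add_smul]
  module

lemma apply_deformedBracket_eq_zero (ht : ∀ x y : L, t ⁅x, y⁆ = 0) (x y : L) :
    t (deformedBracket t α γ x y) = 0 := by
  simp [deformedBracket, ht, mul_comm]

lemma deformedBracket_of_apply_eq_zero {p : L} (hp : t p = 0) (z : L) :
    deformedBracket t α γ p z = α • ⁅p, z⁆ + (γ * t z) • p := by
  simp [deformedBracket, hp, mul_smul]

lemma deformedJacobiator_eq (ht : ∀ x y : L, t ⁅x, y⁆ = 0) (x y z : L) :
    deformedJacobiator t α γ x y z = (α * γ) • (t x • ⁅z, y⁆ + t y • ⁅x, z⁆ + t z • ⁅y, x⁆) := by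
  simp only [deformedJacobiator,
    deformedBracket_of_apply_eq_zero α γ (apply_deformedBracket_eq_zero α γ ht _ _)]
  simp only [deformedBracket, add_lie, sub_lie, smul_lie]
  linear_combination (norm := module) (α * α) • lie_lie_add_lie_lie_add_lie_lie x y z

lemma deformedBracket_deformedJacobiator_alternating_sum (ht : ∀ x y : L, t ⁅x, y⁆ = 0)
    (A B C D : L) :
    deformedBracket t α γ (deformedJacobiator t α γ A B C) D +
      deformedBracket t α γ (deformedJacobiator t α γ C B D) A +
      deformedBracket t α γ (deformedJacobiator t α γ C D A) B +
      deformedBracket t α γ (deformedJacobiator t α γ A D B) C = 0 := by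
  simp only [deformedJacobiator_eq α γ ht]
  simp (disch := simp [ht]) only [deformedBracket_of_apply_eq_zero]
  simp only [smul_lie, add_lie]
  linear_combination (norm := module)
    (α * α * γ) • (t A • lie_lie_add_lie_lie_add_lie_lie C B D +
      t B • lie_lie_add_lie_lie_add_lie_lie A C D + t C • lie_lie_add_lie_lie_add_lie_lie B A D +
      t D • lie_lie_add_lie_lie_add_lie_lie A B C) -
    (α * γ * γ) • ((t D * t A) • lie_skew C B + (t D * t B) • lie_skew A C +
      (t D * t C) • lie_skew B A + (t A * t C) • lie_skew D B + (t A * t B) • lie_skew C D +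
      (t B * t C) • lie_skew A D)

end DeformedBracket

section MatrixCommutator

attribute [local instance] LieRing.ofAssociativeRing LieAlgebra.ofAssociativeAlgebra

lemma traceLinearMap_lie {m R : Type*} [Fintype m] [DecidableEq m] [CommRing R]
    (A B : Matrix m m R) : traceLinearMap m R R ⁅A, B⁆ = 0 := by
  rw [traceLinearMap_apply, Ring.lie_def, trace_sub, trace_mul_comm, sub_self]

lemma circ_eq_deformedBracket {n : ℕ} (α γ : ℂ) (A B : Matrix (Fin n) (Fin n) ℂ) :
    circ α γ A B = deformedBracket (traceLinearMap (Fin n) ℂ ℂ) α γ A B := by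
  simp [circ, deformedBracket, Ring.lie_def]

theorem stmt_0_general (n : ℕ) (α γ : ℂ)
    (A B C D : Matrix (Fin n) (Fin n) ℂ) :
    circ α γ (circ α γ (circ α γ A B) C) D + circ α γ (circ α γ (circ α γ C B) D) A +
    circ α γ (circ α γ (circ α γ C D) A) B + circ α γ (circ α γ (circ α γ A D) B) C +
    circ α γ (circ α γ (circ α γ C A) B) D + circ α γ (circ α γ (circ α γ D C) B) A +
    circ α γ (circ α γ (circ α γ A C) D) B + circ α γ (circ α γ (circ α γ B A) D) C +
    circ α γ (circ α γ (circ α γ B C) A) D + circ α γ (circ α γ (circ α γ B D) C) A +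
    circ α γ (circ α γ (circ α γ D A) C) B + circ α γ (circ α γ (circ α γ D B) A) C = 0 := by
  have h := deformedBracket_deformedJacobiator_alternating_sum α γ traceLinearMap_lie A B C D
  simp only [deformedJacobiator, add_deformedBracket] at h
  simp only [circ_eq_deformedBracket]
  rw [← h]
  abel

theorem stmt_0 (n : ℕ) (hn : 0 < n) (α γ : ℂ)
    (A B C D : Matrix (Fin n) (Fin n) ℂ) :
    circ α γ (circ α γ (circ α γ A B) C) D + circ α γ (circ α γ (circ α γ C B) D) A +
    circ α γ (circ α γ (circ α γ C D) A) B + circ α γ (circ α γ (circ α γ A D) B) C +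
    circ α γ (circ α γ (circ α γ C A) B) D + circ α γ (circ α γ (circ α γ D C) B) A +
    circ α γ (circ α γ (circ α γ A C) D) B + circ α γ (circ α γ (circ α γ B A) D) C +
    circ α γ (circ α γ (circ α γ B C) A) D + circ α γ (circ α γ (circ α γ B D) C) A +
    circ α γ (circ α γ (circ α γ D A) C) B + circ α γ (circ α γ (circ α γ D B) A) C = 0 :=
  stmt_0_general n α γ A B C D

end MatrixCommutator
end

section
/- Let n be a positive integer and let α, γ be complex numbers. Define φ₂(A, B) = α(AB − BA) + γ((tr B)·A − (tr A)·B) on n×n complex matrices, define φ₃(A₁, A₂, A₃) = φ₂(φ₂(A₂, A₃), A₁) − φ₂(φ₂(A₁, A₃), A₂) + φ₂(φ₂(A₁, A₂), A₃), and define φ₄(A₁, A₂, A₃, A₄) = φ₂(φ₃(A₂, A₃, A₄), A₁) − φ₂(φ₃(A₁, A₃, A₄), A₂) + φ₂(φ₃(A₁, A₂, A₄), A₃) − φ₂(φ₃(A₁, A₂, A₃), A₄). Then φ₄(A₁, A₂, A₃, A₄) = 0 for all n×n complex matrices A₁, A₂, A₃, A₄. -/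
open Matrix

/-- The deformed commutator `φ₂(A, B) = α(AB − BA) + γ((tr B)·A − (tr A)·B)`. -/
noncomputable def phi2 {n : ℕ} (α γ : ℂ) (A B : Matrix (Fin n) (Fin n) ℂ) :
    Matrix (Fin n) (Fin n) ℂ :=
  α • (A * B - B * A) + γ • (B.trace • A - A.trace • B)

/-- `φ₃(A₁, A₂, A₃) = φ₂(φ₂(A₂,A₃),A₁) − φ₂(φ₂(A₁,A₃),A₂) + φ₂(φ₂(A₁,A₂),A₃)`. -/
noncomputable def phi3 {n : ℕ} (α γ : ℂ) (A₁ A₂ A₃ : Matrix (Fin n) (Fin n) ℂ) :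
    Matrix (Fin n) (Fin n) ℂ :=
  phi2 α γ (phi2 α γ A₂ A₃) A₁ - phi2 α γ (phi2 α γ A₁ A₃) A₂ +
    phi2 α γ (phi2 α γ A₁ A₂) A₃

/-- `φ₄(A₁,A₂,A₃,A₄) = Σᵢ (−1)^{i−1} φ₂(φ₃(complement of Aᵢ), Aᵢ)`. -/
noncomputable def phi4 {n : ℕ} (α γ : ℂ) (A₁ A₂ A₃ A₄ : Matrix (Fin n) (Fin n) ℂ) :
    Matrix (Fin n) (Fin n) ℂ :=
  phi2 α γ (phi3 α γ A₂ A₃ A₄) A₁ - phi2 α γ (phi3 α γ A₁ A₃ A₄) A₂ +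
    phi2 α γ (phi3 α γ A₁ A₂ A₄) A₃ - phi2 α γ (phi3 α γ A₁ A₂ A₃) A₄

/-!
`φ₂` takes values in trace-zero matrices, and for `tr X = 0` it reduces to
`φ₂(X, A) = α⁅X, A⁆ + γ (tr A) X`. Expanding `φ₃` this way, its `α²` part is a Jacobiator and its
`γ²` part cancels, leaving `φ₃(A₁, A₂, A₃) = -αγ Σ ± (tr Aᵢ)⁅Aⱼ, Aₖ⁆`. Feeding this into `φ₄`,
the `αγ²` terms cancel in pairs and the `α²γ` terms collect into `tr Aᵢ` times the Jacobiator
of the other three matrices.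
-/

theorem lie_lie_sub_lie_lie_add_lie_lie {L : Type*} [LieRing L] (x y z : L) :
    ⁅⁅y, z⁆, x⁆ - ⁅⁅x, z⁆, y⁆ + ⁅⁅x, y⁆, z⁆ = 0 := by
  rw [← lie_skew ⁅y, z⁆ x, ← lie_skew ⁅x, z⁆ y, ← lie_skew ⁅x, y⁆ z, ← lie_skew x z, lie_neg,
    ← neg_eq_zero, ← lie_jacobi x y z]
  abel

attribute [local instance] LieRing.ofAssociativeRing

section

variable {n : ℕ} (α γ : ℂ)

theorem phi2_eq_lie (A B : Matrix (Fin n) (Fin n) ℂ) :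
    phi2 α γ A B = α • ⁅A, B⁆ + γ • (B.trace • A - A.trace • B) := by
  rw [phi2, Ring.lie_def]

theorem trace_phi2 (A B : Matrix (Fin n) (Fin n) ℂ) : (phi2 α γ A B).trace = 0 := by
  simp only [phi2, trace_add, trace_smul, trace_sub, trace_mul_comm A B, sub_self, smul_eq_mul]
  ring

theorem phi2_of_trace_eq_zero {X : Matrix (Fin n) (Fin n) ℂ} (hX : X.trace = 0)
    (A : Matrix (Fin n) (Fin n) ℂ) : phi2 α γ X A = α • ⁅X, A⁆ + (γ * A.trace) • X := by
  simp [phi2_eq_lie, hX, smul_smul]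

theorem phi3_eq (A₁ A₂ A₃ : Matrix (Fin n) (Fin n) ℂ) :
    phi3 α γ A₁ A₂ A₃ = -(α * γ) •
      (A₁.trace • ⁅A₂, A₃⁆ - A₂.trace • ⁅A₁, A₃⁆ + A₃.trace • ⁅A₁, A₂⁆) := by
  simp only [phi3, phi2_of_trace_eq_zero _ _ (trace_phi2 _ _ _ _)]
  simp only [phi2_eq_lie, add_lie, sub_lie, smul_lie]
  rw [← lie_skew A₂ A₁, ← lie_skew A₃ A₁, ← lie_skew A₃ A₂]
  linear_combination (norm := module) α ^ 2 • lie_lie_sub_lie_lie_add_lie_lie A₁ A₂ A₃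

theorem trace_phi3 (A₁ A₂ A₃ : Matrix (Fin n) (Fin n) ℂ) : (phi3 α γ A₁ A₂ A₃).trace = 0 := by
  simp only [phi3, trace_add, trace_sub, trace_phi2, sub_self, add_zero]

end

theorem stmt_1_general (n : ℕ) (α γ : ℂ)
    (A₁ A₂ A₃ A₄ : Matrix (Fin n) (Fin n) ℂ) :
    phi4 α γ A₁ A₂ A₃ A₄ = 0 := by
  simp only [phi4, phi2_of_trace_eq_zero _ _ (trace_phi3 _ _ _ _ _)]
  simp only [phi3_eq, smul_lie, add_lie, sub_lie]
  linear_combination (norm := module)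
    (α ^ 2 * γ) • (A₁.trace • lie_lie_sub_lie_lie_add_lie_lie A₂ A₃ A₄ -
      A₂.trace • lie_lie_sub_lie_lie_add_lie_lie A₁ A₃ A₄ +
      A₃.trace • lie_lie_sub_lie_lie_add_lie_lie A₁ A₂ A₄ -
      A₄.trace • lie_lie_sub_lie_lie_add_lie_lie A₁ A₂ A₃)

theorem stmt_1 (n : ℕ) (hn : 0 < n) (α γ : ℂ)
    (A₁ A₂ A₃ A₄ : Matrix (Fin n) (Fin n) ℂ) :
    phi4 α γ A₁ A₂ A₃ A₄ = 0 :=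
  stmt_1_general n α γ A₁ A₂ A₃ A₄
end

section
/- Let I and J be finite index types and let α, β, γ be complex numbers with α + β + γ = 0. On the space A of pairs X = (X₁, X₂), where X₁ is an I×J complex matrix and X₂ is a J×I complex matrix, define the 3-commutator T(X, Y, Z) = (P, Q) with P = α(X₁Y₂Z₁ + Z₁Y₂X₁) + β(Z₁X₂Y₁ + Y₁X₂Z₁) + γ(X₁Z₂Y₁ + Y₁Z₂X₁) and Q = α(X₂Y₁Z₂ + Z₂Y₁X₂) + β(Z₂X₁Y₂ + Y₂X₁Z₂) + γ(X₂Z₁Y₂ + Y₂Z₁X₂). Then for all X, Y, Z in A one has T(X, Y, Z) + T(Z, X, Y) + T(Y, Z, X) = 0 (both components vanish). -/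
open Matrix

/-- The 3-commutator on pairs of rectangular matrices
`(X₁ : I×J, X₂ : J×I)`, with weights `α β γ`. -/
noncomputable def tcomm {I J : Type*} [Fintype I] [Fintype J] (α β γ : ℂ)
    (X Y Z : Matrix I J ℂ × Matrix J I ℂ) : Matrix I J ℂ × Matrix J I ℂ :=
  (α • (X.1 * Y.2 * Z.1 + Z.1 * Y.2 * X.1) +
     β • (Z.1 * X.2 * Y.1 + Y.1 * X.2 * Z.1) +
     γ • (X.1 * Z.2 * Y.1 + Y.1 * Z.2 * X.1),
   α • (X.2 * Y.1 * Z.2 + Z.2 * Y.1 * X.2) +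
     β • (Z.2 * X.1 * Y.2 + Y.2 * X.1 * Z.2) +
     γ • (X.2 * Z.1 * Y.2 + Y.2 * Z.1 * X.2))

/-! The first component of `tcomm` is a weighted sum of Jordan triple products
`{a b c} = abc + cba`, which are symmetric in the outer arguments. Up to that symmetry, each of the
three triple products occurs in the cyclic sum once with each weight, so the cyclic sum is
`(α + β + γ)` times a fixed matrix. The second component is the first one for the pairs with
their two blocks exchanged. -/

section JordanTriple

variable {I J R : Type*} [Fintype I] [Fintype J] [NonUnitalNonAssocSemiring R]

def jordanTriple (a : Matrix I J R) (b : Matrix J I R) (c : Matrix I J R) : Matrix I J R :=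
  a * b * c + c * b * a

theorem jordanTriple_comm (a : Matrix I J R) (b : Matrix J I R) (c : Matrix I J R) :
    jordanTriple a b c = jordanTriple c b a := by
  unfold jordanTriple
  exact add_comm _ _

end JordanTriple

section TComm

variable {I J : Type*} [Fintype I] [Fintype J] (α β γ : ℂ) (X Y Z : Matrix I J ℂ × Matrix J I ℂ)

theorem tcomm_fst : (tcomm α β γ X Y Z).1 =
    α • jordanTriple X.1 Y.2 Z.1 + β • jordanTriple Z.1 X.2 Y.1 +
      γ • jordanTriple X.1 Z.2 Y.1 := by
  simp only [tcomm, jordanTriple]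

theorem tcomm_snd_eq_fst_swap :
    (tcomm α β γ X Y Z).2 = (tcomm α β γ X.swap Y.swap Z.swap).1 :=
  rfl

theorem tcomm_cyclic_sum_fst :
    (tcomm α β γ X Y Z).1 + (tcomm α β γ Z X Y).1 + (tcomm α β γ Y Z X).1 =
      (α + β + γ) • (jordanTriple X.1 Y.2 Z.1 + jordanTriple Z.1 X.2 Y.1 +
        jordanTriple X.1 Z.2 Y.1) := by
  rw [tcomm_fst, tcomm_fst, tcomm_fst, jordanTriple_comm Z.1 Y.2 X.1,
    jordanTriple_comm Y.1 Z.2 X.1, jordanTriple_comm Y.1 X.2 Z.1]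
  module

end TComm

theorem stmt_6 {I J : Type*} [Fintype I] [Fintype J] (α β γ : ℂ)
    (h : α + β + γ = 0) (X Y Z : Matrix I J ℂ × Matrix J I ℂ) :
    tcomm α β γ X Y Z + tcomm α β γ Z X Y + tcomm α β γ Y Z X = 0 := by
  refine Prod.ext ?_ ?_
  · simp only [Prod.fst_add, tcomm_cyclic_sum_fst, h, zero_smul, Prod.fst_zero]
  · simp only [Prod.snd_add, tcomm_snd_eq_fst_swap, tcomm_cyclic_sum_fst, h, zero_smul,
      Prod.snd_zero]
end

section
/- Let I and J be finite index types and set α = 1, β = exp(2πi/3), γ = exp(4πi/3) (the three cube roots of unity). On the space A of pairs X = (X₁, X₂), where X₁ is an I×J complex matrix and X₂ is a J×I complex matrix, define the 3-commutator T(X, Y, Z) = (P, Q) with P = α(X₁Y₂Z₁ + Z₁Y₂X₁) + β(Z₁X₂Y₁ + Y₁X₂Z₁) + γ(X₁Z₂Y₁ + Y₁Z₂X₁) and Q = α(X₂Y₁Z₂ + Z₂Y₁X₂) + β(Z₂X₁Y₂ + Y₂X₁Z₂) + γ(X₂Z₁Y₂ + Y₂Z₁X₂). Then for all A, B, C, D,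 E in A, writing ((X,Y,Z)W,V) for T(T(X,Y,Z), W, V), one has ((A,B,C)D,E) + ((B,C,D)E,A) + ((C,D,E)A,B) + ((D,E,A)B,C) + ((E,A,B)C,D) + ((C,B,A)E,D) + ((B,A,E)D,C) + ((A,E,D)C,B) + ((E,D,C)B,A) + ((D,C,B)A,E) + ((D,A,C)E,B) + ((A,C,E)B,D) + ((C,E,B)D,A) + ((E,B,D)A,C) + ((B,D,A)C,E) + ((C,A,D)B,E) + ((A,D,B)E,C) + ((D,B,E)C,A) + ((B,E,C)A,D) + ((E,C,A)D,B) = 0. -/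
open Matrix Complex

set_option maxHeartbeats 4000000 in
theorem stmt_7 {I J : Type*} [Fintype I] [Fintype J]
    (α β γ : ℂ) (hα : α = 1)
    (hβ : β = Complex.exp (2 * Real.pi * Complex.I / 3))
    (hγ : γ = Complex.exp (4 * Real.pi * Complex.I / 3))
    (A B C D E : Matrix I J ℂ × Matrix J I ℂ) :
    tcomm α β γ (tcomm α β γ A B C) D E + tcomm α β γ (tcomm α β γ B C D) E A +
    tcomm α β γ (tcomm α β γ C D E) A B + tcomm α β γ (tcomm α β γ D E A) B C +
    tcomm α β γ (tcomm α β γ E A B) C D + tcomm α β γ (tcomm α β γ C B A) E D +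
    tcomm α β γ (tcomm α β γ B A E) D C + tcomm α β γ (tcomm α β γ A E D) C B +
    tcomm α β γ (tcomm α β γ E D C) B A + tcomm α β γ (tcomm α β γ D C B) A E +
    tcomm α β γ (tcomm α β γ D A C) E B + tcomm α β γ (tcomm α β γ A C E) B D +
    tcomm α β γ (tcomm α β γ C E B) D A + tcomm α β γ (tcomm α β γ E B D) A C +
    tcomm α β γ (tcomm α β γ B D A) C E + tcomm α β γ (tcomm α β γ C A D) B E +
    tcomm α β γ (tcomm α β γ A D B) E C + tcomm α β γ (tcomm α β γ D B E) C A +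
    tcomm α β γ (tcomm α β γ B E C) A D + tcomm α β γ (tcomm α β γ E C A) D B = 0 := by
  subst hα
  have hq : β ^ 2 + β + 1 = 0 := by
    have h3 : β ^ 3 = 1 := by
      rw [hβ, ← Complex.exp_nat_mul]
      norm_num
      rw [show (3 : ℂ) * (2 * Real.pi * Complex.I / 3) = 2 * Real.pi * Complex.I by ring]
      exact Complex.exp_two_pi_mul_I
    have hne : β ≠ 1 := by
      rw [hβ]
      intro h
      rw [Complex.exp_eq_one_iff] at h
      obtain ⟨n, hn⟩ := h
      have hpi : (Real.pi : ℂ) ≠ 0 := by simpa using Real.pi_ne_zero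
      have hI : (Complex.I : ℂ) ≠ 0 := Complex.I_ne_zero
      have h2 : (2 * Real.pi * Complex.I : ℂ) ≠ 0 := by
        simp [hpi, hI, Complex.ext_iff]
      have h31 : ((n * 3 : ℤ) : ℂ) = 1 := by
        push_cast
        field_simp at hn
        apply mul_left_cancel₀ h2
        linear_combination -(2 * Real.pi * Complex.I) * hn
      have : (n * 3 : ℤ) = 1 := by exact_mod_cast h31
      omega
    have hfac : (β - 1) * (β ^ 2 + β + 1) = 0 := by linear_combination h3
    rcases mul_eq_zero.mp hfac with h | h
    · exact absurd (by linear_combination h) hne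
    · exact h
  have hγ2 : γ = β ^ 2 := by
    rw [hγ, hβ, ← Complex.exp_nat_mul]
    norm_num
    ring_nf
  have e5 : β ^ 2 = -1 - β := by linear_combination hq
  have e1 : β * β = -1 - β := by linear_combination hq
  have e2 : β * (-1 - β) = 1 := by linear_combination -hq
  have e3 : (-1 - β) * β = 1 := by linear_combination -hq
  have e4 : (-1 - β) * (-1 - β) = β := by linear_combination hq
  rw [hγ2, Prod.ext_iff]
  constructor <;>
  · simp only [tcomm, Prod.fst_add, Prod.snd_add, Prod.fst_zero, Prod.snd_zero, one_smul,
      Matrix.mul_add, Matrix.add_mul, smul_add, Matrix.smul_mul, Matrix.mul_smul,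
      smul_smul, Matrix.mul_assoc]
    simp only [e5, e1, e2, e3, e4, one_smul]
    match_scalars <;> ring1
end

section
/- Let I and J be finite index types and let α, β, γ be complex numbers satisfying α + β + γ = 0 and αβ + βγ + γα = 0. On the space A of pairs X = (X₁, X₂), where X₁ is an I×J complex matrix and X₂ is a J×I complex matrix, define the 3-commutator T(X, Y, Z) = (P, Q) with P = α(X₁Y₂Z₁ + Z₁Y₂X₁) + β(Z₁X₂Y₁ + Y₁X₂Z₁) + γ(X₁Z₂Y₁ + Y₁Z₂X₁) and Q = α(X₂Y₁Z₂ + Z₂Y₁X₂) + β(Z₂X₁Y₂ + Y₂X₁Z₂) + γ(X₂Z₁Y₂ + Y₂Z₁X₂). Then for all A, B, C, D, E in A, writing ((X,Y,Z)W,V) for T(T(X,Y,Z), W, V), one has ((A,B,C)D,E) + ((B,C,D)E,A) + ((C,D,E)A,B) + ((D,E,A)B,C) + ((E,A,B)C,D) + ((C,B,A)E,D) + ((B,A,E)D,C) + ((A,E,D)C,B) + ((E,D,C)B,A) + ((D,C,B)A,E) + ((D,A,C)E,B) + ((A,C,E)B,D) + ((C,E,B)D,A) + ((E,B,D)A,C)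 + ((B,D,A)C,E) + ((C,A,D)B,E) + ((A,D,B)E,C) + ((D,B,E)C,A) + ((B,E,C)A,D) + ((E,C,A)D,B) = 0. -/
/-!
Placing `X = (X₁, X₂)` as the off-diagonal blocks of a square matrix over `I ⊕ J` turns
`tcomm α β γ X Y Z` into `α (XYZ + ZYX) + β (ZXY + YXZ) + γ (XZY + YZX)`, computed in an
associative algebra. The identity therefore only has to be checked for this ternary operation
in an arbitrary non-unital associative algebra. There, expanding the twenty double products gives
each of the 120 words in five letters a coefficient that is a combination of `α + β + γ` and
`αβ + βγ + γα`, for instance `α² + β² + γ² + αβ + βγ + γα = (α + β + γ)² - (αβ + βγ + γα)`.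
-/

open Matrix Complex

section TripleComm

variable {K R : Type*} [CommRing K] [NonUnitalRing R] [Module K R] [IsScalarTower K R R]
  [SMulCommClass K R R]

def tripleComm (α β γ : K) (x y z : R) : R :=
  α • (x * y * z + z * y * x) + β • (z * x * y + y * x * z) + γ • (x * z * y + y * z * x)

variable (α β γ : K)

local notation "⟦" x ", " y ", " z "⟧" => tripleComm α β γ x y z

set_option maxHeartbeats 400000 in
theorem tripleComm_cyclic_sum_eq_zero (h1 : α + β + γ = 0) (h2 : α * β + β * γ + γ * α = 0)
    (a b c d e : R) :
    ⟦⟦a, b, c⟧, d, e⟧ + ⟦⟦b, c, d⟧, e, a⟧ + ⟦⟦c, d, e⟧, a, b⟧ + ⟦⟦d, e, a⟧, b, c⟧ +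
    ⟦⟦e, a, b⟧, c, d⟧ + ⟦⟦c, b, a⟧, e, d⟧ + ⟦⟦b, a, e⟧, d, c⟧ + ⟦⟦a, e, d⟧, c, b⟧ +
    ⟦⟦e, d, c⟧, b, a⟧ + ⟦⟦d, c, b⟧, a, e⟧ + ⟦⟦d, a, c⟧, e, b⟧ + ⟦⟦a, c, e⟧, b, d⟧ +
    ⟦⟦c, e, b⟧, d, a⟧ + ⟦⟦e, b, d⟧, a, c⟧ + ⟦⟦b, d, a⟧, c, e⟧ + ⟦⟦c, a, d⟧, b, e⟧ +
    ⟦⟦a, d, b⟧, e, c⟧ + ⟦⟦d, b, e⟧, c, a⟧ + ⟦⟦b, e, c⟧, a, d⟧ + ⟦⟦e, c, a⟧, d, b⟧ = 0 := by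
  obtain rfl : γ = -α - β := by linear_combination h1
  have hq : α ^ 2 + α * β + β ^ 2 = 0 := by linear_combination -h2
  simp only [tripleComm, mul_add, add_mul, smul_mul_assoc, mul_smul_comm, smul_add, smul_smul,
    mul_assoc]
  match_scalars <;> first | ring1 | linear_combination hq | linear_combination -2 * hq

end TripleComm

section OffDiag

variable {I J R : Type*} [Semiring R]

def offDiag : Matrix I J R × Matrix J I R →ₗ[R] Matrix (I ⊕ J) (I ⊕ J) R where
  toFun X := fromBlocks 0 X.1 X.2 0
  map_add' X Y := by simp only [Prod.fst_add, Prod.snd_add, fromBlocks_add, add_zero]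
  map_smul' c X := by
    simp only [Prod.smul_fst, Prod.smul_snd, fromBlocks_smul, smul_zero, RingHom.id_apply]

theorem offDiag_injective : Function.Injective (offDiag : Matrix I J R × Matrix J I R → _) := by
  intro X Y h
  obtain ⟨-, h₁, h₂, -⟩ := fromBlocks_inj.mp h
  exact Prod.ext h₁ h₂

theorem offDiag_mul_mul [Fintype I] [Fintype J] (X Y Z : Matrix I J R × Matrix J I R) :
    offDiag X * offDiag Y * offDiag Z = offDiag (X.1 * Y.2 * Z.1, X.2 * Y.1 * Z.2) := by
  simp only [offDiag, LinearMap.coe_mk, AddHom.coe_mk, fromBlocks_multiply, Matrix.zero_mul,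
    Matrix.mul_zero, add_zero, zero_add]

end OffDiag

theorem offDiag_tcomm {I J : Type*} [Fintype I] [Fintype J] (α β γ : ℂ)
    (X Y Z : Matrix I J ℂ × Matrix J I ℂ) :
    offDiag (tcomm α β γ X Y Z) = tripleComm α β γ (offDiag X) (offDiag Y) (offDiag Z) := by
  simp only [tripleComm, offDiag_mul_mul, ← map_add, ← map_smul, tcomm, Prod.smul_mk,
    Prod.mk_add_mk]

theorem stmt_8 {I J : Type*} [Fintype I] [Fintype J]
    (α β γ : ℂ) (h1 : α + β + γ = 0)
    (h2 : α * β + β * γ + γ * α = 0)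
    (A B C D E : Matrix I J ℂ × Matrix J I ℂ) :
    tcomm α β γ (tcomm α β γ A B C) D E + tcomm α β γ (tcomm α β γ B C D) E A +
    tcomm α β γ (tcomm α β γ C D E) A B + tcomm α β γ (tcomm α β γ D E A) B C +
    tcomm α β γ (tcomm α β γ E A B) C D + tcomm α β γ (tcomm α β γ C B A) E D +
    tcomm α β γ (tcomm α β γ B A E) D C + tcomm α β γ (tcomm α β γ A E D) C B +
    tcomm α β γ (tcomm α β γ E D C) B A + tcomm α β γ (tcomm α β γ D C B) A E +
    tcomm α β γ (tcomm α β γ D A C) E B + tcomm α β γ (tcomm α β γ A C E) B D +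
    tcomm α β γ (tcomm α β γ C E B) D A + tcomm α β γ (tcomm α β γ E B D) A C +
    tcomm α β γ (tcomm α β γ B D A) C E + tcomm α β γ (tcomm α β γ C A D) B E +
    tcomm α β γ (tcomm α β γ A D B) E C + tcomm α β γ (tcomm α β γ D B E) C A +
    tcomm α β γ (tcomm α β γ B E C) A D + tcomm α β γ (tcomm α β γ E C A) D B = 0 := by
  apply offDiag_injective
  simp only [map_add, map_zero, offDiag_tcomm]
  exact tripleComm_cyclic_sum_eq_zero α β γ h1 h2 _ _ _ _ _
end
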